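/- arXiv:2405.07742 — 2 statements merged into one kernel-verified Lean document; each statement's English description precedes it below -/
import Mathlib

section
/- Let ℓ ∈ ℕ and suppose g satisfies (A1) and (A2). Then for all u ∈ 𝓗₀^ℓ one has Σ_{n=⌈ℓ/2⌉}^∞ |((−Δ)^{ℓ/2}u)_n|² ≥ Σ_{n=ℓ}^∞ ρ_n(g)·|u_n|², where ρ_n(g) := ((−Δ)^ℓ g)_n / g_n. If in addition g satisfies (A2'), then ρ_n(g) ≥ 0 for all n ≥ ℓ, i.e. ρ(g) is a discrete Hardy–Rellich–Birman weight. -/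
noncomputable section

open scoped ENNReal

namespace HRB

/-- discrete gradient `(∇u)_n = u_n - u_{n-1}` -/
def grad (u : ℤ → ℂ) : ℤ → ℂ := fun n => u n - u (n - 1)

/-- discrete divergence (forward difference) `(∂u)_n = u_{n+1} - u_n` -/
def fdiff (u : ℤ → ℂ) : ℤ → ℂ := fun n => u (n + 1) - u n

/-- averaging operator `(Mu)_n = (u_n + u_{n+1})/2` -/
def avg (u : ℤ → ℂ) : ℤ → ℂ := fun n => (u n + u (n + 1)) / 2

/-- negative discrete Laplacian `((-Δ)u)_n = 2u_n - u_{n-1} - u_{n+1}` -/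
def negLap (u : ℤ → ℂ) : ℤ → ℂ := fun n => 2 * u n - u (n - 1) - u (n + 1)

/-- `(-Δ)^{ℓ/2}`: equal to `(-Δ)^m` if `ℓ = 2m` and to `∇ ∘ (-Δ)^m` if `ℓ = 2m+1`. -/
def halfPow (l : ℕ) (u : ℤ → ℂ) : ℤ → ℂ :=
  if l % 2 = 0 then negLap^[l / 2] u else grad (negLap^[l / 2] u)

def gradR (u : ℤ → ℝ) : ℤ → ℝ := fun n => u n - u (n - 1)

def fdiffR (u : ℤ → ℝ) : ℤ → ℝ := fun n => u (n + 1) - u n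

def negLapR (u : ℤ → ℝ) : ℤ → ℝ := fun n => 2 * u n - u (n - 1) - u (n + 1)

/-- `u ∈ H^ℓ` -/
def memH (l : ℤ) (u : ℤ → ℂ) : Prop := ∀ n : ℤ, n < l → u n = 0

/-- `u ∈ 𝓗₀^ℓ`: compactly supported elements of `H^ℓ` -/
def memH0 (l : ℤ) (u : ℤ → ℂ) : Prop :=
  memH l u ∧ ∃ N : ℤ, ∀ n : ℤ, N ≤ n → u n = 0

/-- real-valued sequences in `H^ℓ` -/
def memHR (l : ℤ) (g : ℤ → ℝ) : Prop := ∀ n : ℤ, n < l → g n = 0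

/-- `Σ_{n=a}^∞ f(n)` (as an unordered real `tsum`) -/
def qsum (a : ℤ) (f : ℤ → ℝ) : ℝ := ∑' n : ℤ, if a ≤ n then f n else 0

/-- `Σ_{n=a}^∞ f(n)` as a sum in `ℝ≥0∞` (for nonnegative `f`) -/
def esum (a : ℤ) (f : ℤ → ℝ) : ℝ≥0∞ :=
  ∑' n : ℤ, if a ≤ n then ENNReal.ofReal (f n) else 0

/-- `⌈ℓ/2⌉` -/
def ceilHalf (l : ℕ) : ℤ := (((l + 1) / 2 : ℕ) : ℤ)

/-- `Σ_{n=⌈ℓ/2⌉}^∞ |((-Δ)^{ℓ/2}u)_n|²` -/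
def energy (l : ℕ) (u : ℤ → ℂ) : ℝ :=
  qsum (ceilHalf l) fun n => ‖halfPow l u n‖ ^ 2

def eenergy (l : ℕ) (u : ℤ → ℂ) : ℝ≥0∞ :=
  esum (ceilHalf l) fun n => ‖halfPow l u n‖ ^ 2

/-- `Σ_{n=l}^∞ ρ_n |u_n|²` -/
def wsum (l : ℤ) (ρ : ℤ → ℝ) (u : ℤ → ℂ) : ℝ := qsum l fun n => ρ n * ‖u n‖ ^ 2

def ewsum (l : ℤ) (ρ : ℤ → ℝ) (u : ℤ → ℂ) : ℝ≥0∞ := esum l fun n => ρ n * ‖u n‖ ^ 2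

/-- Assumption (A1) -/
def A1 (l : ℕ) (g : ℤ → ℝ) : Prop :=
  memHR l g ∧ ∀ k : ℕ, k < l → ∀ n : ℤ, (l : ℤ) - (k : ℤ) ≤ n → 0 < fdiffR^[k] g n

/-- Assumption (A2) -/
def A2 (l : ℕ) (g : ℤ → ℝ) : Prop :=
  ∀ k : ℕ, 1 ≤ k → k < l → ∀ n : ℤ, (l : ℤ) + 1 - (k : ℤ) ≤ n →
    0 ≤ negLapR^[l - k] (fdiffR^[k] g) n

/-- Assumption (A2') -/
def A2' (l : ℕ) (g : ℤ → ℝ) : Prop := ∀ n : ℤ, (l : ℤ) ≤ n → 0 ≤ negLapR^[l] g n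

/-- Asymptotic expansion (Exp_s):
`g_n = Σ_{j=0}^{2ℓ} α_j n^{ℓ-j-s} + O(n^{-ℓ-1-s})` as `n → ∞`, with `α_0 ≠ 0`. -/
def ExpS (l : ℕ) (g : ℤ → ℝ) (s : ℝ) : Prop :=
  ∃ α : ℕ → ℝ, α 0 ≠ 0 ∧ ∃ C : ℝ, ∃ N : ℤ, ∀ n : ℤ, N ≤ n →
    |g n - ∑ j ∈ Finset.range (2 * l + 1), α j * (n : ℝ) ^ ((l : ℝ) - (j : ℝ) - s)| ≤
      C * (n : ℝ) ^ (-(l : ℝ) - 1 - s)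

/-- the weight `ρ(g)_n = ((-Δ)^ℓ g)_n / g_n` -/
def rho (l : ℕ) (g : ℤ → ℝ) : ℤ → ℝ := fun n => negLapR^[l] g n / g n

/-- the `n`-th term of the remainder `𝓡_k^{(ℓ)}(g;u)` -/
def remTerm (l k : ℕ) (g : ℤ → ℝ) (u : ℤ → ℂ) : ℤ → ℝ := fun n =>
  (if k + 1 = l then 1
    else negLapR^[l - 1 - k] (fdiffR^[k + 1] g) n / fdiffR^[k + 1] g n) *
  ‖(Real.sqrt (fdiffR^[k] g n / fdiffR^[k] g (n + 1)) : ℂ) * fdiff^[k] u (n + 1) -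
    (Real.sqrt (fdiffR^[k] g (n + 1) / fdiffR^[k] g n) : ℂ) * fdiff^[k] u n‖ ^ 2

/-- the remainder `𝓡_k^{(ℓ)}(g;u)` -/
def rem (l k : ℕ) (g : ℤ → ℝ) (u : ℤ → ℂ) : ℝ :=
  qsum ((l : ℤ) - (k : ℤ)) (remTerm l k g u)

def erem (l k : ℕ) (g : ℤ → ℝ) (u : ℤ → ℂ) : ℝ≥0∞ :=
  esum ((l : ℤ) - (k : ℤ)) (remTerm l k g u)

/-- `ρ` is a discrete Hardy–Rellich–Birman weight for the power `ℓ` -/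
def IsHRBWeight (l : ℕ) (ρ : ℤ → ℝ) : Prop :=
  (∀ n : ℤ, (l : ℤ) ≤ n → 0 ≤ ρ n) ∧
  ∀ u : ℤ → ℂ, memH0 l u → wsum l ρ u ≤ energy l u

/-- criticality of the weight `ρ` -/
def IsCritical (l : ℕ) (ρ : ℤ → ℝ) : Prop :=
  ∀ ρ' : ℤ → ℝ, (∀ n : ℤ, (l : ℤ) ≤ n → 0 ≤ ρ' n) →
    (∀ u : ℤ → ℂ, memH0 l u → wsum l ρ' u ≤ energy l u) →
    (∀ n : ℤ, (l : ℤ) ≤ n → ρ n ≤ ρ' n) →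
    ∀ n : ℤ, (l : ℤ) ≤ n → ρ' n = ρ n

/-- optimality near infinity of the weight `ρ` -/
def IsOptNearInfinity (l : ℕ) (ρ : ℤ → ℝ) : Prop :=
  ∀ M : ℤ, (l : ℤ) ≤ M → ∀ ε : ℝ, 0 < ε →
    ∃ u : ℤ → ℂ, memH0 M u ∧ energy l u < (1 + ε) * wsum l ρ u

/-- non-attainability of the weight `ρ` -/
def IsNonAttainable (l : ℕ) (ρ : ℤ → ℝ) : Prop :=
  ∀ u : ℤ → ℂ, memH l u → ewsum l ρ u ≠ ⊤ → eenergy l u = ewsum l ρ u →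
    u = 0

/-- `g^{(ℓ)}_n = √n ∏_{j=1}^{ℓ-1} (n-j)` for `n ≥ 0`, zero for `n < 0` -/
def gseq (l : ℕ) : ℤ → ℝ := fun n =>
  if n < 0 then 0 else Real.sqrt (n : ℝ) * ∏ j ∈ Finset.Icc 1 (l - 1), ((n : ℝ) - (j : ℝ))

/-- the optimal weight `ρ^{(ℓ)}` -/
def rhoSeq (l : ℕ) : ℤ → ℝ := rho l (gseq l)

/-- `g^{(ℓ)}(q)_n = n^q ∏_{j=1}^{ℓ-1}(n-j)` for `n ≥ 0`, zero for `n < 0` -/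
def gq (l : ℕ) (q : ℝ) : ℤ → ℝ := fun n =>
  if n < 0 then 0 else (n : ℝ) ^ q * ∏ j ∈ Finset.Icc 1 (l - 1), ((n : ℝ) - (j : ℝ))

/-- `h_n = n^{ℓ-1/2}` for `n ≥ 0`, zero for `n < 0` -/
def hseq (l : ℕ) : ℤ → ℝ := fun n =>
  if n < 0 then 0 else (n : ℝ) ^ ((l : ℝ) - 1 / 2)

/-- generalized binomial coefficient `C(ν,m) = ν(ν-1)⋯(ν-m+1)/m!` -/
def genBinom (ν : ℝ) (m : ℕ) : ℝ := (∏ i ∈ Finset.range m, (ν - (i : ℝ))) / (m.factorial : ℝ)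

/-- (signed) Stirling numbers of the first kind `s(n,k)`, extended by `0` for `k ≤ 0` -/
def stirling1 (n : ℕ) (k : ℤ) : ℝ :=
  if k ≤ 0 then 0
  else (-1 : ℝ) ^ (n + k.toNat) *
    ∑ t ∈ (Finset.Icc 1 (n - 1)).powersetCard (n - k.toNat), ∏ i ∈ t, (i : ℝ)

/-- `X_m^{(ℓ)} = Σ_{j=-ℓ}^{ℓ} C(2ℓ,ℓ+j)(-1)^j j^m`, with `X_0^{(ℓ)} = 0` -/
def Xcoef (l m : ℕ) : ℝ :=
  if m = 0 then 0
  else ∑ j ∈ Finset.Icc (-(l : ℤ)) (l : ℤ),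
    (((2 * l).choose ((l : ℤ) + j).toNat : ℕ) : ℝ) * (-1 : ℝ) ^ j * ((j : ℝ)) ^ m

/-- the coefficients `r_k^{(ℓ)}` -/
def rcoef (l k : ℕ) : ℝ :=
  ∑ m ∈ Finset.Icc (2 * l) k,
    genBinom ((l : ℝ) + (m : ℝ) - (k : ℝ) - 1 / 2) m * stirling1 l ((l : ℤ) + (m : ℤ) - (k : ℤ)) *
      Xcoef l m

/-- Pochhammer symbol `(x)_ℓ = x(x+1)⋯(x+ℓ-1)` -/
def poch (x : ℝ) (l : ℕ) : ℝ := ∏ i ∈ Finset.range l, (x + (i : ℝ))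

/-!
For `k ≤ ℓ` let `S_k(u) = Σ_n w_k(n) |(∂^k u)_n|²`, where `w_k = (-Δ)^{ℓ-k} ∂^k g / ∂^k g` for
`k < ℓ` and `w_ℓ = 1`. Then `S_0` is the weighted sum with weight `ρ(g)`, and `S_ℓ` is the energy
because `|((-Δ)^{ℓ/2} u)_n| = |(∂^ℓ u)_{n - ⌈ℓ/2⌉}|`. Writing `S_{k+1}` in ground-state form with
respect to the sequence `∂^k g`, which is positive by (A1), gives `S_{k+1} = S_k + 𝓡_k`: the
potential produced by the ground state is exactly `w_k`, since `(-Δ)` factors through `∂`. The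
remainder `𝓡_k` is nonnegative because its weight `w_{k+1}` is, by (A1) and (A2). Telescoping,
`S_ℓ = S_0 + Σ_k 𝓡_k ≥ S_0`.
-/

open Function

lemma _root_.Function.HasFiniteSupport.map₂_succ {M N : Type*} [Zero M] [Zero N] {v : ℤ → M}
    (hv : HasFiniteSupport v) (F : ℤ → M → M → N) (hF : ∀ n, F n 0 0 = 0) :
    HasFiniteSupport fun n => F n (v n) (v (n + 1)) := by
  refine (hv.union (hv.preimage (add_left_injective 1).injOn)).subset fun n hn => ?_
  by_contra h
  simp_all

lemma hasFiniteSupport_fdiff_iterate {u : ℤ → ℂ} (hu : HasFiniteSupport u) (k : ℕ) :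
    HasFiniteSupport (fdiff^[k] u) := by
  induction k with
  | zero => exact hu
  | succ k ih =>
    rw [iterate_succ']
    exact ih.map₂_succ (fun _ x y => y - x) fun _ => sub_self 0

lemma memH0.hasFiniteSupport {l : ℤ} {u : ℤ → ℂ} (hu : memH0 l u) : HasFiniteSupport u := by
  obtain ⟨hlow, N, hhigh⟩ := hu
  refine (Set.finite_Ico l N).subset fun n hn => ?_
  by_contra h
  rw [Set.mem_Ico, not_and_or, not_le, not_lt] at h
  exact hn (h.elim (hlow n) (hhigh n))

lemma fdiff_iterate_eq_zero_of_lt {l : ℤ} {u : ℤ → ℂ} (hu : memH l u) (k : ℕ) {n : ℤ}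
    (hn : n < l - k) : fdiff^[k] u n = 0 := by
  induction k generalizing n with
  | zero => exact hu n (by simpa using hn)
  | succ k ih =>
    rw [iterate_succ_apply', fdiff, ih (by push_cast at hn; omega), ih (by push_cast at hn; omega),
      sub_zero]

lemma fdiffR_iterate_eq_zero_of_lt {l : ℤ} {g : ℤ → ℝ} (hg : memHR l g) (k : ℕ) {n : ℤ}
    (hn : n < l - k) : fdiffR^[k] g n = 0 := by
  induction k generalizing n with
  | zero => exact hg n (by simpa using hn)
  | succ k ih =>
    rw [iterate_succ_apply', fdiffR, ih (by push_cast at hn; omega),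
      ih (by push_cast at hn; omega), sub_zero]

lemma qsum_eq_tsum {a : ℤ} {f : ℤ → ℝ} (hf : ∀ n < a, f n = 0) : qsum a f = ∑' n, f n :=
  tsum_congr fun n => by
    split_ifs with h
    · rfl
    · exact (hf n (not_le.mp h)).symm

lemma qsum_nonneg {a : ℤ} {f : ℤ → ℝ} (hf : ∀ n, a ≤ n → 0 ≤ f n) : 0 ≤ qsum a f :=
  tsum_nonneg fun n => by split_ifs with h <;> simp [hf n, h]

lemma norm_sub_sq_eq_add_of_mul_eq_one {a b : ℝ} (hab : a * b = 1) (x y : ℂ) :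
    ‖x - y‖ ^ 2 =
      ‖(a : ℂ) * x - (b : ℂ) * y‖ ^ 2 + (1 - a ^ 2) * ‖x‖ ^ 2 + (1 - b ^ 2) * ‖y‖ ^ 2 := by
  simp only [Complex.sq_norm, Complex.normSq_apply, Complex.sub_re, Complex.sub_im,
    Complex.mul_re, Complex.mul_im, Complex.ofReal_re, Complex.ofReal_im]
  linear_combination (2 * x.re * y.re + 2 * x.im * y.im) * hab

lemma norm_sub_sq_eq_ground_state (x y : ℂ) {p q : ℝ} (hp : 0 ≤ p) (hq : 0 ≤ q)
    (hx : x ≠ 0 → 0 < q) (hy : y ≠ 0 → 0 < p) :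
    ‖x - y‖ ^ 2 = ‖(√(p / q) : ℂ) * x - (√(q / p) : ℂ) * y‖ ^ 2
      + (1 - p / q) * ‖x‖ ^ 2 + (1 - q / p) * ‖y‖ ^ 2 := by
  rcases eq_or_ne x 0 with rfl | hx0
  · simp [mul_pow, Real.sq_sqrt (div_nonneg hq hp)]
    ring
  rcases eq_or_ne y 0 with rfl | hy0
  · simp [mul_pow, Real.sq_sqrt (div_nonneg hp hq)]
    ring
  have hp_pos := hy hy0
  have hq_pos := hx hx0
  have hab : √(p / q) * √(q / p) = 1 := by
    rw [← Real.sqrt_mul (by positivity), div_mul_div_comm, mul_comm p q,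
      div_self (by positivity), Real.sqrt_one]
  have := norm_sub_sq_eq_add_of_mul_eq_one hab x y
  rwa [Real.sq_sqrt (by positivity), Real.sq_sqrt (by positivity)] at this

theorem tsum_mul_norm_fdiff_sq_eq_ground_state {v : ℤ → ℂ} (hv : HasFiniteSupport v)
    (μ : ℤ → ℝ) {h : ℤ → ℝ} (h_nonneg : ∀ n, 0 ≤ h n) (h_pos : ∀ n, v n ≠ 0 → 0 < h n) :
    ∑' n, μ n * ‖fdiff v n‖ ^ 2 =
      ∑' n, (μ (n - 1) * (1 - h (n - 1) / h n) + μ n * (1 - h (n + 1) / h n)) * ‖v n‖ ^ 2 +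
      ∑' n, μ n * ‖(√(h n / h (n + 1)) : ℂ) * v (n + 1) - (√(h (n + 1) / h n) : ℂ) * v n‖ ^ 2 := by
  set P : ℤ → ℝ := fun n => μ n * (1 - h n / h (n + 1)) * ‖v (n + 1)‖ ^ 2
  set Q : ℤ → ℝ := fun n => μ n * (1 - h (n + 1) / h n) * ‖v n‖ ^ 2
  set R : ℤ → ℝ := fun n =>
    μ n * ‖(√(h n / h (n + 1)) : ℂ) * v (n + 1) - (√(h (n + 1) / h n) : ℂ) * v n‖ ^ 2
  have summable {F : ℤ → ℂ → ℂ → ℝ} (hF : ∀ n, F n 0 0 = 0) :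
      Summable fun n => F n (v n) (v (n + 1)) :=
    summable_of_hasFiniteSupport (hv.map₂_succ F hF)
  have hP : Summable P := summable (F := fun n _ y => μ n * (1 - h n / h (n + 1)) * ‖y‖ ^ 2)
    (by simp)
  have hQ : Summable Q := summable (F := fun n x _ => μ n * (1 - h (n + 1) / h n) * ‖x‖ ^ 2)
    (by simp)
  have hR : Summable R := summable (F := fun n x y =>
    μ n * ‖(√(h n / h (n + 1)) : ℂ) * y - (√(h (n + 1) / h n) : ℂ) * x‖ ^ 2) (by simp)
  have hP' : Summable fun n => μ (n - 1) * (1 - h (n - 1) / h n) * ‖v n‖ ^ 2 :=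
    summable (F := fun n x _ => μ (n - 1) * (1 - h (n - 1) / h n) * ‖x‖ ^ 2) (by simp)
  have hP_shift : ∑' n, P n = ∑' n, μ (n - 1) * (1 - h (n - 1) / h n) * ‖v n‖ ^ 2 := by
    rw [← (Equiv.subRight 1).tsum_eq P]
    simp [P]
  calc ∑' n, μ n * ‖fdiff v n‖ ^ 2 = ∑' n, (P n + Q n + R n) := by
        refine tsum_congr fun n => ?_
        rw [fdiff, norm_sub_sq_eq_ground_state _ _ (h_nonneg n) (h_nonneg (n + 1))
          (h_pos (n + 1)) (h_pos n)]
        ring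
    _ = ∑' n, P n + ∑' n, Q n + ∑' n, R n := by
        rw [(hP.add hQ).tsum_add hR, hP.tsum_add hQ]
    _ = _ := by
        rw [hP_shift, ← hP'.tsum_add hQ]
        congr 2
        ext n
        ring

lemma negLapR_iterate_backward_diff (j : ℕ) (f : ℤ → ℝ) (n : ℤ) :
    negLapR^[j] (fun m => f (m - 1) - f m) n = negLapR^[j] f (n - 1) - negLapR^[j] f n := by
  induction j generalizing f with
  | zero => rfl
  | succ j ih =>
    have : negLapR (fun m => f (m - 1) - f m) = fun m => negLapR f (m - 1) - negLapR f m := by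
      ext m
      simp only [negLapR, sub_add_cancel]
      ring_nf
    rw [iterate_succ_apply, this, ih]
    rfl

lemma negLapR_iterate_succ_apply (j : ℕ) (f : ℤ → ℝ) (n : ℤ) :
    negLapR^[j + 1] f n = negLapR^[j] (fdiffR f) (n - 1) - negLapR^[j] (fdiffR f) n := by
  have : negLapR f = fun m => fdiffR f (m - 1) - fdiffR f m := by
    ext m
    simp only [negLapR, fdiffR, sub_add_cancel]
    ring
  rw [iterate_succ_apply, this, negLapR_iterate_backward_diff]

lemma negLap_iterate_apply (m : ℕ) (u : ℤ → ℂ) (n : ℤ) :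
    negLap^[m] u n = (-1) ^ m * fdiff^[2 * m] u (n - m) := by
  induction m generalizing n with
  | zero => simp
  | succ m ih =>
    rw [iterate_succ_apply', show 2 * (m + 1) = 2 * m + 1 + 1 by ring, iterate_succ_apply',
      iterate_succ_apply']
    simp only [negLap, fdiff, ih]
    push_cast
    ring_nf

lemma norm_halfPow_apply (l : ℕ) (u : ℤ → ℂ) (n : ℤ) :
    ‖halfPow l u n‖ = ‖fdiff^[l] u (n - ceilHalf l)‖ := by
  obtain ⟨m, rfl | rfl⟩ := Nat.even_or_odd' l
  · have hc : ceilHalf (2 * m) = m := by unfold ceilHalf; congr 1; omega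
    rw [halfPow, if_pos (by omega), show 2 * m / 2 = m by omega, negLap_iterate_apply, hc,
      norm_mul]
    simp
  · have hc : ceilHalf (2 * m + 1) = m + 1 := by unfold ceilHalf; push_cast; omega
    rw [halfPow, if_neg (by omega), show (2 * m + 1) / 2 = m by omega, hc, grad,
      negLap_iterate_apply, negLap_iterate_apply, iterate_succ_apply', fdiff, ← mul_sub,
      norm_mul]
    simp only [norm_pow, norm_neg, norm_one, one_pow, one_mul]
    ring_nf

def levelWeight (l : ℕ) (g : ℤ → ℝ) (k : ℕ) (n : ℤ) : ℝ :=
  if k = l then 1 else negLapR^[l - k] (fdiffR^[k] g) n / fdiffR^[k] g n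

def levelSum (l : ℕ) (g : ℤ → ℝ) (u : ℤ → ℂ) (k : ℕ) : ℝ :=
  ∑' n, levelWeight l g k n * ‖fdiff^[k] u n‖ ^ 2

section LevelSums

variable {l k : ℕ} {g : ℤ → ℝ}

lemma levelWeight_succ_mul_fdiffR (hA1 : A1 l g) (hk : k < l) {n : ℤ} (hn : (l : ℤ) - k - 1 ≤ n) :
    levelWeight l g (k + 1) n * fdiffR (fdiffR^[k] g) n =
      negLapR^[l - (k + 1)] (fdiffR^[k + 1] g) n := by
  rw [← iterate_succ_apply' fdiffR]
  by_cases hkl : k + 1 = l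
  · subst hkl
    simp [levelWeight]
  · have hpos := hA1.2 (k + 1) (by omega) n (by push_cast; omega)
    rw [levelWeight, if_neg hkl, div_mul_cancel₀ _ hpos.ne']

lemma levelWeight_eq_combination_succ (hA1 : A1 l g) (hk : k < l) {n : ℤ} (hn : (l : ℤ) - k ≤ n) :
    levelWeight l g (k + 1) (n - 1) * (1 - fdiffR^[k] g (n - 1) / fdiffR^[k] g n) +
      levelWeight l g (k + 1) n * (1 - fdiffR^[k] g (n + 1) / fdiffR^[k] g n) =
      levelWeight l g k n := by
  have hpos : 0 < fdiffR^[k] g n := hA1.2 k hk n hn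
  have hprev := levelWeight_succ_mul_fdiffR hA1 hk (n := n - 1) (by omega)
  have hcur := levelWeight_succ_mul_fdiffR hA1 hk (n := n) (by omega)
  rw [show levelWeight l g k n = negLapR^[l - k] (fdiffR^[k] g) n / fdiffR^[k] g n from
      if_neg (by omega), show l - k = l - (k + 1) + 1 by omega, negLapR_iterate_succ_apply,
    ← iterate_succ_apply' fdiffR, ← hprev, ← hcur]
  simp only [fdiffR, sub_add_cancel]
  field_simp
  ring

lemma levelSum_succ (hA1 : A1 l g) (hk : k < l) {u : ℤ → ℂ} (hu : memH0 l u) :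
    levelSum l g u (k + 1) = levelSum l g u k + rem l k g u := by
  have hv := hasFiniteSupport_fdiff_iterate hu.hasFiniteSupport k
  have hv_low {n : ℤ} (hn : n < l - k) : fdiff^[k] u n = 0 :=
    fdiff_iterate_eq_zero_of_lt hu.1 k hn
  have hh_low {n : ℤ} (hn : n < l - k) : fdiffR^[k] g n = 0 :=
    fdiffR_iterate_eq_zero_of_lt hA1.1 k hn
  have hh_pos {n : ℤ} (hn : l - k ≤ n) : 0 < fdiffR^[k] g n := hA1.2 k hk n hn
  have key := tsum_mul_norm_fdiff_sq_eq_ground_state hv (levelWeight l g (k + 1))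
    (h := fdiffR^[k] g) (fun n => by
      rcases lt_or_ge n (l - k) with hn | hn
      · exact (hh_low hn).ge
      · exact (hh_pos hn).le)
    (fun n hn => hh_pos (not_lt.mp (mt hv_low hn)))
  unfold levelSum
  simp only [iterate_succ_apply' fdiff]
  rw [key]
  congr 1
  · refine tsum_congr fun n => ?_
    rcases lt_or_ge n (l - k) with hn | hn
    · simp [hv_low hn]
    · rw [levelWeight_eq_combination_succ hA1 hk hn]
  · rw [rem, qsum_eq_tsum fun n hn => by simp [remTerm, hv_low hn, hh_low hn]]
    refine tsum_congr fun n => ?_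
    simp only [remTerm, levelWeight, show l - 1 - k = l - (k + 1) by omega]

lemma rem_nonneg (hA1 : A1 l g) (hA2 : A2 l g) (hk : k < l) (u : ℤ → ℂ) :
    0 ≤ rem l k g u := by
  refine qsum_nonneg fun n hn => mul_nonneg ?_ (by positivity)
  split_ifs with hkl
  · exact zero_le_one
  · rw [show l - 1 - k = l - (k + 1) by omega]
    exact div_nonneg (hA2 (k + 1) (by omega) (by omega) n (by push_cast; omega))
      (hA1.2 (k + 1) (by omega) n (by push_cast; omega)).le

lemma levelSum_zero (hl : 1 ≤ l) {u : ℤ → ℂ} (hu : memH l u) :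
    levelSum l g u 0 = wsum l (rho l g) u := by
  rw [wsum, qsum_eq_tsum fun n hn => by simp [hu n hn]]
  refine tsum_congr fun n => ?_
  simp [levelWeight, rho, show 0 ≠ l by omega]

lemma levelSum_self {u : ℤ → ℂ} (hu : memH l u) : levelSum l g u l = energy l u := by
  have hvanish {n : ℤ} (hn : n < ceilHalf l) : fdiff^[l] u (n - ceilHalf l) = 0 :=
    fdiff_iterate_eq_zero_of_lt hu l (by omega)
  rw [energy, qsum_eq_tsum fun n hn => by rw [norm_halfPow_apply, hvanish hn, norm_zero, sq,
    mul_zero]]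
  simp only [norm_halfPow_apply, levelSum, levelWeight, if_true, one_mul]
  exact ((Equiv.subRight _).tsum_eq fun n => ‖fdiff^[l] u n‖ ^ 2).symm

theorem energy_eq_wsum_add_sum_rem (hl : 1 ≤ l) (hA1 : A1 l g) {u : ℤ → ℂ} (hu : memH0 l u) :
    energy l u = wsum l (rho l g) u + ∑ k ∈ Finset.range l, rem l k g u := by
  have hstep : ∀ k ∈ Finset.range l, levelSum l g u (k + 1) - levelSum l g u k = rem l k g u :=
    fun k hk => by rw [levelSum_succ hA1 (Finset.mem_range.mp hk) hu, add_sub_cancel_left]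
  rw [← levelSum_self (g := g) hu.1, ← levelSum_zero hl hu.1, ← Finset.sum_congr rfl hstep,
    Finset.sum_range_sub, add_sub_cancel]

end LevelSums

/-- Theorem 2: the abstract discrete Hardy–Rellich–Birman inequality. -/
theorem statement2 (l : ℕ) (hl : 1 ≤ l) (g : ℤ → ℝ) (hA1 : A1 l g) (hA2 : A2 l g) :
    (∀ u : ℤ → ℂ, memH0 l u → wsum l (rho l g) u ≤ energy l u) ∧
    (A2' l g → ∀ n : ℤ, (l : ℤ) ≤ n → 0 ≤ rho l g n) := by
  refine ⟨fun u hu => ?_, fun hA2' n hn => ?_⟩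
  · rw [energy_eq_wsum_add_sum_rem hl hA1 hu]
    exact le_add_of_nonneg_right
      (Finset.sum_nonneg fun k hk => rem_nonneg hA1 hA2 (Finset.mem_range.mp hk) u)
  · exact div_nonneg (hA2' n hn) (hA1.2 0 (by omega) n (by simpa using hn)).le

end HRB
end
end

section
/- Let ℓ ∈ ℕ and let g^{(ℓ)} be defined by g^{(ℓ)}_n := √n · ∏_{j=1}^{ℓ−1}(n−j) for integers n ≥ 0 and g^{(ℓ)}_n := 0 for n < 0. Then ((−Δ)^{ℓ−k}∂^k g^{(ℓ)})_n > 0 for all integers n ≥ ℓ−k and all 0 ≤ k < ℓ. In particular ((−Δ)^ℓ g^{(ℓ)})_n > 0 for all n ≥ ℓ. -/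
noncomputable section

open scoped ENNReal

namespace HRB

/-!
Write `g^{(ℓ)}_n = G(n)` with `G(x) = √x ∏_{j=1}^{ℓ-1} (x - j)`, which vanishes for `x ≤ 0` because
`Real.sqrt` does. The left-hand side equals `(-1)^{ℓ-k} (∂^N g^{(ℓ)})_m` with `N = 2ℓ - k > ℓ` and
`m = n - ℓ + k ≥ 0`. On `[0, ∞)`, `G = ∑_{t} (-1)^{|t|} (∏ t) x^{ℓ-1-|t|+1/2}`, the sum over the
subsets `t` of `{1, …, ℓ-1}`. A forward difference of a function continuous on `[x, ∞)` whose
derivative is positive on `(x, ∞)` is positive at `x`; iterating, `∂^N F` has the sign of `F^{(N)}`.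
For `F(x) = x^{p+1/2}` and `N > p` that sign is `(-1)^{N-p-1}`, so after the factor `(-1)^{|t|}`
every summand of `(-1)^{N-ℓ} ∂^N G` is positive.
-/

open Set Finset fwdDiff

section fwdDiffCalculus

variable {h x : ℝ}

lemma continuousOn_fwdDiff_iter {f : ℝ → ℝ} (hh : 0 ≤ h) (hf : ContinuousOn f (Ici x)) (N : ℕ) :
    ContinuousOn (Δ_[h] ^[N] f) (Ici x) := by
  induction N generalizing f with
  | zero => exact hf
  | succ N ih =>
    refine ih ((hf.comp (continuous_add_const h).continuousOn fun y hy => ?_).sub hf)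
    exact le_add_of_le_of_nonneg hy hh

lemma hasDerivAt_fwdDiff_iter {f f' : ℝ → ℝ} (hh : 0 ≤ h)
    (hf : ∀ y, x < y → HasDerivAt f (f' y) y) (N : ℕ) :
    ∀ y, x < y → HasDerivAt (Δ_[h] ^[N] f) (Δ_[h] ^[N] f' y) y := by
  induction N generalizing f f' with
  | zero => exact hf
  | succ N ih =>
    refine ih fun y hy => ?_
    exact (hf (y + h) (by linarith)).comp_add_const y h |>.sub (hf y hy)

lemma fwdDiff_iter_congr_Ici {f g : ℝ → ℝ} (hh : 0 ≤ h) (hfg : EqOn f g (Ici x)) (N : ℕ) :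
    Δ_[h] ^[N] f x = Δ_[h] ^[N] g x := by
  simp only [fwdDiff_iter_eq_sum_shift]
  refine sum_congr rfl fun k _ => ?_
  rw [hfg (le_add_of_nonneg_right (nsmul_nonneg hh k))]

lemma fwdDiff_pos_of_hasDerivAt_pos {f f' : ℝ → ℝ} (hh : 0 < h) (hf : ContinuousOn f (Ici x))
    (hf' : ∀ y, x < y → HasDerivAt f (f' y) y) (hpos : ∀ y, x < y → 0 < f' y) :
    0 < Δ_[h] f x := by
  have hmono : StrictMonoOn f (Ici x) := by
    refine strictMonoOn_of_hasDerivWithinAt_pos (convex_Ici x) hf (fun y hy => ?_)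
      (fun y hy => hpos y (by rwa [interior_Ici] at hy))
    rw [interior_Ici] at hy ⊢
    exact (hf' y hy).hasDerivWithinAt
  exact sub_pos.2 (hmono self_mem_Ici (le_add_of_nonneg_right hh.le) (lt_add_of_pos_right x hh))

theorem fwdDiff_iter_pos_of_hasDerivAt_chain {D : ℕ → ℝ → ℝ} (hh : 0 < h) (N : ℕ)
    (hcont : ContinuousOn (D 0) (Ici x))
    (hderiv : ∀ j, ∀ y, x < y → HasDerivAt (D j) (D (j + 1) y) y)
    (hpos : ∀ y, x < y → 0 < D (N + 1) y) :
    0 < Δ_[h] ^[N + 1] (D 0) x := by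
  induction N generalizing D x with
  | zero => exact fwdDiff_pos_of_hasDerivAt_pos hh hcont (hderiv 0) hpos
  | succ N ih =>
    rw [Function.iterate_succ_apply']
    refine fwdDiff_pos_of_hasDerivAt_pos hh (continuousOn_fwdDiff_iter hh.le hcont _)
      (hasDerivAt_fwdDiff_iter hh.le (hderiv 0) _) fun y hy => ?_
    refine ih (D := fun j => D (j + 1))
      (fun z hz => (hderiv 1 z (hy.trans_le hz)).continuousAt.continuousWithinAt)
      (fun j z hz => hderiv (j + 1) z (hy.trans hz)) fun z hz => hpos z (hy.trans hz)

lemma descPochhammer_eval_add_half_sign (p N : ℕ) :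
    0 < (-1 : ℝ) ^ (N - (p + 1)) * (descPochhammer ℝ N).eval ((p : ℝ) + 1 / 2) := by
  induction N with
  | zero => simp
  | succ N ih =>
    rw [descPochhammer_succ_eval]
    rcases le_or_gt N p with hNp | hpN
    · have hfac : 0 < (p : ℝ) + 1 / 2 - N := by
        have : (N : ℝ) ≤ p := by exact_mod_cast hNp
        linarith
      rw [show N + 1 - (p + 1) = N - (p + 1) by omega, ← mul_assoc]
      exact mul_pos ih hfac
    · have hfac : (p : ℝ) + 1 / 2 - N < 0 := by
        have : (p : ℝ) + 1 ≤ N := by exact_mod_cast hpN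
        linarith
      rw [show N + 1 - (p + 1) = N - (p + 1) + 1 by omega, pow_succ]
      nlinarith

theorem fwdDiff_iter_rpow_add_half_sign (hh : 0 < h) (hx : 0 ≤ x) {p N : ℕ}
    (hpN : p < N) :
    0 < (-1 : ℝ) ^ (N - (p + 1)) * Δ_[h] ^[N] (fun y => y ^ ((p : ℝ) + 1 / 2)) x := by
  obtain ⟨N, rfl⟩ : ∃ M, N = M + 1 := ⟨N - 1, by omega⟩
  set a : ℝ := (p : ℝ) + 1 / 2
  set c : ℝ := (-1) ^ (N + 1 - (p + 1))
  let D : ℕ → ℝ → ℝ := fun j y => c * ((descPochhammer ℝ j).eval a * y ^ (a - j))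
  have hD0 : D 0 = c • fun y => y ^ a := by
    funext y; simp [D]
  have hcont : ContinuousOn (D 0) (Ici x) := by
    rw [hD0]
    exact (continuous_id.rpow_const fun _ => Or.inr (by positivity)).continuousOn.const_smul c
  have hderiv : ∀ j, ∀ y, x < y → HasDerivAt (D j) (D (j + 1) y) y := by
    intro j y hy
    refine ((Real.hasDerivAt_rpow_const (p := a - j) (Or.inl (hx.trans_lt hy).ne')).const_mul
      _ |>.const_mul c).congr_deriv ?_
    simp only [D, descPochhammer_succ_eval, Nat.cast_succ]
    ring_nf
  have hpos : ∀ y, x < y → 0 < D (N + 1) y := fun y hy => by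
    have := Real.rpow_pos_of_pos (hx.trans_lt hy) (a - (N + 1 : ℕ))
    have := descPochhammer_eval_add_half_sign p (N + 1)
    simp only [D, c]
    rw [← mul_assoc]
    positivity
  have := fwdDiff_iter_pos_of_hasDerivAt_chain hh N hcont hderiv hpos
  rwa [hD0, fwdDiff_iter_const_smul] at this

lemma sqrt_mul_prod_sub_eq_sum (s : Finset ℕ) (hx : 0 ≤ x) :
    √x * ∏ j ∈ s, (x - j) =
      ∑ t ∈ s.powerset, ((-1) ^ #t * ∏ j ∈ t, (j : ℝ)) * x ^ ((#(s \ t) : ℝ) + 1 / 2) := by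
  rw [Finset.prod_sub, mul_sum]
  refine sum_congr rfl fun t _ => ?_
  rw [prod_const, Real.rpow_add' hx (by positivity), Real.rpow_natCast,
    Real.sqrt_eq_rpow]
  ring

theorem fwdDiff_iter_sqrt_mul_prod_sub_sign (hh : 0 < h) (hx : 0 ≤ x) (s : Finset ℕ)
    {N : ℕ} (hN : #s < N) :
    0 < (-1 : ℝ) ^ (N - (#s + 1)) * Δ_[h] ^[N] (fun y => √y * ∏ j ∈ s, (y - j)) x := by
  have hexpand : Δ_[h] ^[N] (fun y => √y * ∏ j ∈ s, (y - j)) x =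
      ∑ t ∈ s.powerset, ((-1) ^ #t * ∏ j ∈ t, (j : ℝ)) *
        Δ_[h] ^[N] (fun y => y ^ ((#(s \ t) : ℝ) + 1 / 2)) x := by
    rw [fwdDiff_iter_congr_Ici hh.le (g := ∑ t ∈ s.powerset,
      ((-1) ^ #t * ∏ j ∈ t, (j : ℝ)) • fun y => y ^ ((#(s \ t) : ℝ) + 1 / 2))]
    · simp only [fwdDiff_iter_finsetSum, fwdDiff_iter_const_smul, Finset.sum_apply,
        Pi.smul_apply, smul_eq_mul]
    · intro y hy
      simp only [Finset.sum_apply, Pi.smul_apply, smul_eq_mul]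
      exact sqrt_mul_prod_sub_eq_sum s (hx.trans hy)
  rw [hexpand, mul_sum]
  refine sum_pos' (fun t ht => ?_) ⟨∅, empty_mem_powerset s, ?_⟩
  · have hts : t ⊆ s := mem_powerset.1 ht
    have hsign := fwdDiff_iter_rpow_add_half_sign hh hx (p := #(s \ t)) (N := N)
      ((Finset.card_le_card sdiff_subset).trans_lt hN)
    have hexp : N - (#s + 1) + #t = N - (#(s \ t) + 1) := by
      have := Finset.card_le_card hts
      rw [card_sdiff_of_subset hts]; omega
    calc (0 : ℝ) ≤ (∏ j ∈ t, (j : ℝ)) * ((-1) ^ (N - (#(s \ t) + 1)) *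
          Δ_[h] ^[N] (fun y => y ^ ((#(s \ t) : ℝ) + 1 / 2)) x) := by positivity
      _ = _ := by rw [← hexp, pow_add]; ring
  · simpa using fwdDiff_iter_rpow_add_half_sign hh hx hN

end fwdDiffCalculus

lemma fdiffR_eq_fwdDiff : fdiffR = fwdDiff 1 := rfl

lemma fdiffR_iterate_comp_intCast (F : ℝ → ℝ) (N : ℕ) (m : ℤ) :
    fdiffR^[N] (fun n : ℤ => F n) m = Δ_[1] ^[N] F m := by
  simp only [fdiffR_eq_fwdDiff, fwdDiff_iter_eq_sum_shift, nsmul_one]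
  push_cast
  rfl

lemma negLapR_eq_neg_fdiffR_two (v : ℤ → ℝ) :
    negLapR v = (-1 : ℝ) • fun n => fdiffR^[2] v (n + -1) := by
  funext n
  simp only [negLapR, fdiffR, Function.iterate_succ_apply, Function.iterate_zero_apply,
    Pi.smul_apply, smul_eq_mul]
  ring_nf

lemma negLapR_iterate (j : ℕ) (v : ℤ → ℝ) (n : ℤ) :
    negLapR^[j] v n = (-1) ^ j * fdiffR^[2 * j] v (n - j) := by
  induction j generalizing v n with
  | zero => simp
  | succ j ih =>
    rw [Function.iterate_succ_apply, ih, negLapR_eq_neg_fdiffR_two, fdiffR_eq_fwdDiff,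
      fwdDiff_iter_const_smul, Pi.smul_apply, fwdDiff_iter_comp_add,
      show 2 * (j + 1) = 2 * j + 2 by ring, Function.iterate_add_apply]
    push_cast
    ring_nf

lemma gseq_eq_sqrt_mul_prod (l : ℕ) :
    gseq l = fun n : ℤ => √(n : ℝ) * ∏ j ∈ Finset.Icc 1 (l - 1), ((n : ℝ) - j) := by
  funext n
  unfold gseq
  split_ifs with hn
  · rw [Real.sqrt_eq_zero'.2 (by exact_mod_cast hn.le), zero_mul]
  · rfl

/-- claim (b) of the proof of Theorem 4: positivity of
`(-Δ)^{ℓ-k} ∂^k g^{(ℓ)}` on `[ℓ-k, ∞)`; in particular `(-Δ)^ℓ g^{(ℓ)} > 0` on `[ℓ, ∞)`. -/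
theorem statement18 (l : ℕ) (hl : 1 ≤ l) :
    (∀ k : ℕ, k < l → ∀ n : ℤ, (l : ℤ) - (k : ℤ) ≤ n →
      0 < negLapR^[l - k] (fdiffR^[k] (gseq l)) n) ∧
    (∀ n : ℤ, (l : ℤ) ≤ n → 0 < negLapR^[l] (gseq l) n) := by
  have hcard : #(Finset.Icc 1 (l - 1)) + 1 = l := by rw [Nat.card_Icc]; omega
  have main : ∀ k : ℕ, k < l → ∀ n : ℤ, (l : ℤ) - (k : ℤ) ≤ n →
      0 < negLapR^[l - k] (fdiffR^[k] (gseq l)) n := by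
    intro k hk n hn
    have hm : (0 : ℤ) ≤ n - (l - k : ℕ) := by omega
    have hpos := fwdDiff_iter_sqrt_mul_prod_sub_sign one_pos (Int.cast_nonneg hm)
      (Finset.Icc 1 (l - 1)) (N := 2 * (l - k) + k) (by omega)
    rw [hcard, show 2 * (l - k) + k - l = l - k by omega] at hpos
    rwa [negLapR_iterate, ← Function.iterate_add_apply, gseq_eq_sqrt_mul_prod,
      fdiffR_iterate_comp_intCast fun y => √y * ∏ j ∈ Finset.Icc 1 (l - 1), (y - j)]
  exact ⟨main, fun n hn => by simpa using main 0 hl n (by simpa using hn)⟩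

end HRB
end
end
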